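/- Let S = Σ_{k=1}^K max(0, W_k − d) where W_k are i.i.d. nonnegative random variables with P(W_k ≥ x) ≤ e^{−λx}, λ > 0. Then for b > 0 with λb > K e^{−λd}, P(S ≥ b) ≤ exp(−(√(λb) − √(K e^{−λd}))²). -/

import Mathlib

/-!
Each excess `X_k = max 0 (W_k - d)` has tail `P(X_k ≥ t) ≤ e^{-λd} e^{-λt}` for `t > 0`.
By the layer-cake formula `E e^{θX} = 1 + ∫_0^∞ θ e^{θt} P(X ≥ t) dt`, this gives
`E e^{θX_k} ≤ 1 + e^{-λd} θ/(λ-θ) ≤ exp (e^{-λd} θ/(λ-θ))` for `0 ≤ θ < λ`. Independence and the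
Chernoff bound then give `P(S ≥ b) ≤ exp (-θb + K e^{-λd} θ/(λ-θ))`, and the minimising choice
`θ = λ (1 - √(K e^{-λd} / (λb)))` turns the exponent into `-(√(λb) - √(K e^{-λd}))²`.
-/

open MeasureTheory ProbabilityTheory Set Real

lemma intervalIntegral_mul_exp_mul (θ y : ℝ) :
    ∫ t in (0 : ℝ)..y, θ * exp (θ * t) = exp (θ * y) - 1 := by
  rw [intervalIntegral.integral_eq_sub_of_hasDerivAt (f := fun t => exp (θ * t))]
  · simp
  · intro t _
    simpa [mul_comm] using ((hasDerivAt_id t).const_mul θ).exp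
  · exact (by fun_prop : Continuous fun t => θ * exp (θ * t)).intervalIntegrable _ _

lemma setLIntegral_Ioi_ofReal_mul_exp_neg_mul_ofReal_mul_exp {c θ lam : ℝ} (hc : 0 ≤ c)
    (hθ : 0 ≤ θ) (hθlam : θ < lam) :
    ∫⁻ t in Ioi 0, ENNReal.ofReal (c * exp (-(lam * t))) * ENNReal.ofReal (θ * exp (θ * t)) =
      ENNReal.ofReal (c * θ / (lam - θ)) := by
  have hexp : ∀ t, c * exp (-(lam * t)) * (θ * exp (θ * t)) = c * θ * exp ((θ - lam) * t) := by
    intro t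
    rw [mul_mul_mul_comm, ← exp_add]
    ring_nf
  have hint : IntegrableOn (fun t => c * θ * exp ((θ - lam) * t)) (Ioi 0) :=
    (integrableOn_exp_mul_Ioi (by linarith) 0).const_mul _
  simp_rw [← ENNReal.ofReal_mul (mul_nonneg hc (exp_pos _).le), hexp]
  rw [← ofReal_integral_eq_lintegral_ofReal hint
    (Filter.Eventually.of_forall fun t => by positivity), integral_const_mul,
    integral_exp_mul_Ioi (by linarith), mul_zero, exp_zero, neg_div, ← div_neg, neg_sub,
    mul_one_div]

section

variable {Ω : Type*} [MeasurableSpace Ω] {μ : Measure Ω}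

lemma lintegral_exp_mul_le_of_tail [IsProbabilityMeasure μ] {Y : Ω → ℝ} (hYm : Measurable Y)
    (hY0 : 0 ≤ Y) {c θ lam : ℝ} (hc : 0 ≤ c) (hθ : 0 ≤ θ) (hθlam : θ < lam)
    (htail : ∀ t > 0, μ {ω | t ≤ Y ω} ≤ ENNReal.ofReal (c * exp (-(lam * t)))) :
    ∫⁻ ω, ENNReal.ofReal (exp (θ * Y ω)) ∂μ ≤ ENNReal.ofReal (1 + c * θ / (lam - θ)) := by
  have hsplit : ∀ ω, ENNReal.ofReal (exp (θ * Y ω)) =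
      1 + ENNReal.ofReal (∫ t in (0 : ℝ)..Y ω, θ * exp (θ * t)) := by
    intro ω
    rw [intervalIntegral_mul_exp_mul, ← ENNReal.ofReal_one, ← ENNReal.ofReal_add zero_le_one
      (by simpa using one_le_exp (mul_nonneg hθ (hY0 ω))), add_sub_cancel]
  have hlayer := lintegral_comp_eq_lintegral_meas_le_mul μ (Filter.Eventually.of_forall hY0)
    hYm.aemeasurable (g := fun t => θ * exp (θ * t))
    (fun t _ => (by fun_prop : Continuous fun t => θ * exp (θ * t)).intervalIntegrable _ _)
    (Filter.Eventually.of_forall fun t => by positivity)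
  simp_rw [hsplit]
  rw [lintegral_add_left measurable_const, lintegral_const, measure_univ, mul_one, hlayer,
    ENNReal.ofReal_add zero_le_one (div_nonneg (mul_nonneg hc hθ) (by linarith)),
    ENNReal.ofReal_one, ← setLIntegral_Ioi_ofReal_mul_exp_neg_mul_ofReal_mul_exp hc hθ hθlam]
  refine add_le_add_right (setLIntegral_mono' (measurableSet_Ioi (a := (0 : ℝ)))
    fun t ht => ?_) 1
  gcongr
  exact htail t ht

lemma integrable_exp_mul_of_tail [IsProbabilityMeasure μ] {Y : Ω → ℝ} (hYm : Measurable Y)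
    (hY0 : 0 ≤ Y) {c θ lam : ℝ} (hc : 0 ≤ c) (hθ : 0 ≤ θ) (hθlam : θ < lam)
    (htail : ∀ t > 0, μ {ω | t ≤ Y ω} ≤ ENNReal.ofReal (c * exp (-(lam * t)))) :
    Integrable (fun ω => exp (θ * Y ω)) μ := by
  refine ⟨by fun_prop, ?_⟩
  rw [hasFiniteIntegral_iff_ofReal (Filter.Eventually.of_forall fun ω => (exp_pos _).le)]
  exact (lintegral_exp_mul_le_of_tail hYm hY0 hc hθ hθlam htail).trans_lt ENNReal.ofReal_lt_top

lemma mgf_le_of_tail [IsProbabilityMeasure μ] {Y : Ω → ℝ} (hYm : Measurable Y) (hY0 : 0 ≤ Y)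
    {c θ lam : ℝ} (hc : 0 ≤ c) (hθ : 0 ≤ θ) (hθlam : θ < lam)
    (htail : ∀ t > 0, μ {ω | t ≤ Y ω} ≤ ENNReal.ofReal (c * exp (-(lam * t)))) :
    mgf Y μ θ ≤ 1 + c * θ / (lam - θ) := by
  have hbound : 0 ≤ 1 + c * θ / (lam - θ) := by
    have := div_nonneg (mul_nonneg hc hθ) (sub_nonneg.2 hθlam.le)
    linarith
  rw [mgf, integral_eq_lintegral_of_nonneg_ae
    (Filter.Eventually.of_forall fun ω => (exp_pos _).le) (by fun_prop)]
  exact ENNReal.toReal_le_of_le_ofReal hbound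
    (lintegral_exp_mul_le_of_tail hYm hY0 hc hθ hθlam htail)

lemma measureReal_sum_ge_le_of_tail {ι : Type*} [IsProbabilityMeasure μ] [Fintype ι]
    {X : ι → Ω → ℝ} (hXm : ∀ i, Measurable (X i)) (hX0 : ∀ i, 0 ≤ X i)
    (hind : iIndepFun X μ) {c θ lam : ℝ} (hc : 0 ≤ c) (hθ : 0 ≤ θ) (hθlam : θ < lam)
    (htail : ∀ i, ∀ t > 0, μ {ω | t ≤ X i ω} ≤ ENNReal.ofReal (c * exp (-(lam * t))))
    (b : ℝ) :
    μ.real {ω | b ≤ ∑ i, X i ω} ≤ exp (-θ * b + Fintype.card ι * c * θ / (lam - θ)) := by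
  have hint := hind.integrable_exp_mul_sum hXm (s := Finset.univ)
    fun i _ => integrable_exp_mul_of_tail (hXm i) (hX0 i) hc hθ hθlam (htail i)
  calc μ.real {ω | b ≤ ∑ i, X i ω} = μ.real {ω | b ≤ (∑ i, X i) ω} := by
        simp only [Finset.sum_apply]
    _ ≤ exp (-θ * b) * mgf (∑ i, X i) μ θ := measure_ge_le_exp_mul_mgf b hθ hint
    _ = exp (-θ * b) * ∏ i, mgf (X i) μ θ := by rw [hind.mgf_sum hXm]
    _ ≤ exp (-θ * b) * ∏ _i : ι, exp (c * θ / (lam - θ)) := by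
        gcongr with i
        · exact fun i _ => mgf_nonneg
        · exact (mgf_le_of_tail (hXm i) (hX0 i) hc hθ hθlam (htail i)).trans
            (by linarith [add_one_le_exp (c * θ / (lam - θ))])
    _ = exp (-θ * b + Fintype.card ι * c * θ / (lam - θ)) := by
        rw [Finset.prod_const, Finset.card_univ, ← exp_nat_mul, ← exp_add]
        ring_nf

end

lemma exists_mem_Ioo_neg_mul_add_div_sub_eq_neg_sq {lam b s : ℝ} (hlam : 0 < lam)
    (hs : 0 < s) (hsb : s < lam * b) :
    ∃ θ ∈ Ioo 0 lam, -θ * b + s * θ / (lam - θ) = -(√(lam * b) - √s) ^ 2 := by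
  set u := √(lam * b)
  set v := √s
  have hu2 : u ^ 2 = lam * b := sq_sqrt (hs.le.trans hsb.le)
  have hv2 : v ^ 2 = s := sq_sqrt hs.le
  have hv : 0 < v := sqrt_pos.2 hs
  have hvu : v < u := sqrt_lt_sqrt hs.le hsb
  have hu : 0 < u := hv.trans hvu
  set θ := lam * (u - v) / u
  have hθu : θ * u = lam * (u - v) := div_mul_cancel₀ _ hu.ne'
  refine ⟨θ, ⟨by positivity, ?_⟩, ?_⟩
  · rw [div_lt_iff₀ hu]
    nlinarith
  have hθb : θ * b = u * (u - v) := by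
    rw [div_mul_eq_mul_div, mul_right_comm, ← hu2]
    field_simp
  have hθs : s * θ / (lam - θ) = v * (u - v) := by
    have hsub : lam - θ = lam * v / u := by
      rw [eq_div_iff hu.ne']
      linear_combination -hθu
    rw [hsub, ← hv2]
    field_simp
    exact hθu
  rw [hθs, neg_mul, hθb]
  ring

lemma measureReal_sum_ge_le_exp_neg_sq_of_tail {Ω ι : Type*} [MeasurableSpace Ω]
    {μ : Measure Ω} [IsProbabilityMeasure μ] [Fintype ι] [Nonempty ι] {X : ι → Ω → ℝ}
    (hXm : ∀ i, Measurable (X i)) (hX0 : ∀ i, 0 ≤ X i) (hind : iIndepFun X μ) {c lam b : ℝ}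
    (hc : 0 < c) (hlam : 0 < lam)
    (htail : ∀ i, ∀ t > 0, μ {ω | t ≤ X i ω} ≤ ENNReal.ofReal (c * exp (-(lam * t))))
    (hb : Fintype.card ι * c < lam * b) :
    μ.real {ω | b ≤ ∑ i, X i ω} ≤ exp (-(√(lam * b) - √(Fintype.card ι * c)) ^ 2) := by
  obtain ⟨θ, ⟨hθ, hθlam⟩, hexponent⟩ :=
    exists_mem_Ioo_neg_mul_add_div_sub_eq_neg_sq hlam (by positivity) hb
  rw [← hexponent]
  exact measureReal_sum_ge_le_of_tail hXm hX0 hind hc.le hθ.le hθlam htail b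

lemma measure_le_max_zero_sub_le {Ω : Type*} [MeasurableSpace Ω] {μ : Measure Ω}
    [IsFiniteMeasure μ] {W : Ω → ℝ} {lam d t : ℝ} (hd : 0 ≤ d) (ht : 0 < t)
    (htail : ∀ x, 0 ≤ x → μ.real {ω | x ≤ W ω} ≤ exp (-(lam * x))) :
    μ {ω | t ≤ max 0 (W ω - d)} ≤ ENNReal.ofReal (exp (-(lam * d)) * exp (-(lam * t))) := by
  have hset : {ω | t ≤ max 0 (W ω - d)} = {ω | t + d ≤ W ω} := by
    ext ω
    simp only [mem_ofPred_eq, le_max_iff, not_le.2 ht, false_or, le_sub_iff_add_le]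
  rw [hset, ← exp_add, ENNReal.le_ofReal_iff_toReal_le (measure_ne_top _ _) (exp_pos _).le]
  calc μ.real {ω | t + d ≤ W ω} ≤ exp (-(lam * (t + d))) := htail _ (by positivity)
    _ = exp (-(lam * d) + -(lam * t)) := by ring_nf

theorem stmt6_general {Ω : Type*} [MeasurableSpace Ω] (μ : Measure Ω) [IsProbabilityMeasure μ]
    (K : ℕ) (hK : 0 < K) (W : Fin K → Ω → ℝ)
    (hWm : ∀ k, Measurable (W k))
    (hind : ProbabilityTheory.iIndepFun W μ)
    (lam d b : ℝ) (hlam : 0 < lam) (hd : 0 ≤ d)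
    (htail : ∀ k, ∀ x : ℝ, 0 ≤ x → (μ {ω | x ≤ W k ω}).toReal ≤ Real.exp (-(lam * x)))
    (hbc : (K : ℝ) * Real.exp (-(lam * d)) < lam * b) :
    (μ {ω | b ≤ ∑ k, max 0 (W k ω - d)}).toReal ≤
      Real.exp (-(Real.sqrt (lam * b) - Real.sqrt ((K : ℝ) * Real.exp (-(lam * d))))^2) := by
  have : Nonempty (Fin K) := Fin.pos_iff_nonempty.mp hK
  have hindX : iIndepFun (fun k ω => max 0 (W k ω - d)) μ :=
    hind.comp (fun _ x => max 0 (x - d)) fun _ => by fun_prop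
  have key := measureReal_sum_ge_le_exp_neg_sq_of_tail (X := fun k ω => max 0 (W k ω - d))
    (fun k => by fun_prop) (fun k ω => le_max_left _ _) hindX (exp_pos _) hlam
    (fun k t ht => measure_le_max_zero_sub_le hd ht (htail k)) (by rwa [Fintype.card_fin])
  rwa [Fintype.card_fin] at key

theorem stmt6 {Ω : Type*} [MeasurableSpace Ω] (μ : Measure Ω) [IsProbabilityMeasure μ]
    (K : ℕ) (hK : 0 < K) (W : Fin K → Ω → ℝ)
    (hWm : ∀ k, Measurable (W k)) (hW0 : ∀ k ω, 0 ≤ W k ω)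
    (hind : ProbabilityTheory.iIndepFun W μ)
    (hid : ∀ k k' : Fin K, Measure.map (W k) μ = Measure.map (W k') μ)
    (lam d b : ℝ) (hlam : 0 < lam) (hd : 0 ≤ d) (hb : 0 < b)
    (htail : ∀ k, ∀ x : ℝ, 0 ≤ x → (μ {ω | x ≤ W k ω}).toReal ≤ Real.exp (-(lam * x)))
    (hbc : (K : ℝ) * Real.exp (-(lam * d)) < lam * b) :
    (μ {ω | b ≤ ∑ k, max 0 (W k ω - d)}).toReal ≤
      Real.exp (-(Real.sqrt (lam * b) - Real.sqrt ((K : ℝ) * Real.exp (-(lam * d))))^2) :=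
  stmt6_general μ K hK W hWm hind lam d b hlam hd htail hbc
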